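/- arXiv:2605.21966 — 2 statements merged into one kernel-verified Lean document; each statement's English description precedes it below -/
import Mathlib

section
/- Let (Omega, P) be a probability space and M : Omega x (0,infinity) -> Z_{>=0} be such that for each fixed V, M(V) is measurable with E[M(V)] = V and E[(M(V)-V)^2] <= C_0 * V. Fix s > 0, theta > 1, eta > 0, and let E be the event that M(s) > 0 and M(theta^j * s) <= (1+eta)*theta^j*s for all integers j >= 0. Then P(Omega \ E) <= (C_0/s) * (1 + 1/(eta^2 * (1 - 1/theta))). -/
/-!
The complement of the event is covered by `{|M(s) - s| ≥ s}` (which contains `{M(s) = 0}`) and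
the events `{|M(θʲ s) - θʲ s| ≥ η θʲ s}`. Chebyshev's inequality bounds their probabilities by
`C₀ / s` and `C₀ θ⁻ʲ / (η² s)`, and the geometric series sums the latter to
`C₀ / (η² s (1 - 1/θ))`.
-/

open MeasureTheory

section Chebyshev

variable {Ω : Type*} [MeasurableSpace Ω] {μ : Measure Ω}

theorem measure_le_ofReal_div_of_integral_le {f : Ω → ℝ} (hf : 0 ≤ f) (hfi : Integrable f μ)
    {c B : ℝ} (hc : 0 < c) (hB : ∫ ω, f ω ∂μ ≤ B) :
    μ {ω | c ≤ f ω} ≤ ENNReal.ofReal (B / c) := by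
  have hset : {ω | c ≤ f ω} = {ω | ENNReal.ofReal c ≤ ENNReal.ofReal (f ω)} := by
    ext ω
    simp only [Set.mem_ofPred_eq, ENNReal.ofReal_le_ofReal_iff (hf ω)]
  calc μ {ω | c ≤ f ω}
      ≤ (∫⁻ ω, ENNReal.ofReal (f ω) ∂μ) / ENNReal.ofReal c := by
        rw [hset]
        exact meas_ge_le_lintegral_div hfi.aemeasurable.ennreal_ofReal
          (ENNReal.ofReal_pos.mpr hc).ne' ENNReal.ofReal_ne_top
    _ = ENNReal.ofReal (∫ ω, f ω ∂μ) / ENNReal.ofReal c := by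
        rw [ofReal_integral_eq_lintegral_ofReal hfi (Filter.Eventually.of_forall hf)]
    _ ≤ ENNReal.ofReal B / ENNReal.ofReal c := by gcongr
    _ = ENNReal.ofReal (B / c) := (ENNReal.ofReal_div_of_pos hc).symm

theorem measure_le_abs_sub_le_ofReal_div_sq {X : Ω → ℝ} {m B c : ℝ}
    (hint : Integrable (fun ω => (X ω - m) ^ 2) μ) (hB : ∫ ω, (X ω - m) ^ 2 ∂μ ≤ B)
    (hc : 0 < c) :
    μ {ω | c ≤ |X ω - m|} ≤ ENNReal.ofReal (B / c ^ 2) := by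
  have hset : {ω | c ≤ |X ω - m|} = {ω | c ^ 2 ≤ (X ω - m) ^ 2} := by
    ext ω
    simp only [Set.mem_ofPred_eq, ← sq_abs (X ω - m), sq_le_sq₀ hc.le (abs_nonneg _)]
  rw [hset]
  exact measure_le_ofReal_div_of_integral_le (fun ω => sq_nonneg _) hint (by positivity) hB

theorem measure_relative_deviation_le {X : Ω → ℝ} {V C₀ η : ℝ} (hV : 0 < V) (hη : 0 < η)
    (hint : Integrable (fun ω => (X ω - V) ^ 2) μ) (hvar : ∫ ω, (X ω - V) ^ 2 ∂μ ≤ C₀ * V) :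
    μ {ω | η * V ≤ |X ω - V|} ≤ ENNReal.ofReal (C₀ / (η ^ 2 * V)) := by
  have hform : C₀ * V / (η * V) ^ 2 = C₀ / (η ^ 2 * V) := by
    field_simp
  rw [← hform]
  exact measure_le_abs_sub_le_ofReal_div_sq hint hvar (by positivity)

end Chebyshev

theorem tsum_ofReal_div_pow {a θ : ℝ} (ha : 0 ≤ a) (hθ : 1 < θ) :
    ∑' j : ℕ, ENNReal.ofReal (a / θ ^ j) = ENNReal.ofReal (a / (1 - 1 / θ)) := by
  have hr0 : 0 ≤ 1 / θ := by positivity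
  have hr1 : 1 / θ < 1 := (div_lt_one (by positivity)).mpr hθ
  have hterm : ∀ j : ℕ, a / θ ^ j = a * (1 / θ) ^ j := fun j => by
    rw [one_div_pow, mul_one_div]
  simp_rw [hterm]
  rw [← ENNReal.ofReal_tsum_of_nonneg (fun j => by positivity)
      ((summable_geometric_of_lt_one hr0 hr1).mul_left a),
    tsum_mul_left, tsum_geometric_of_lt_one hr0 hr1, ← div_eq_mul_inv]

def relDeviationEvent {Ω : Type*} (M : ℝ → Ω → ℕ) (c V : ℝ) : Set Ω :=
  {ω | c * V ≤ |(M V ω : ℝ) - V|}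

theorem compl_pivotEvent_subset {Ω : Type*} (M : ℝ → Ω → ℕ) {s θ η : ℝ} (hs : 0 < s) :
    {ω | 0 < M s ω ∧ ∀ j : ℕ, (M (θ ^ j * s) ω : ℝ) ≤ (1 + η) * θ ^ j * s}ᶜ
      ⊆ relDeviationEvent M 1 s ∪ ⋃ j : ℕ, relDeviationEvent M η (θ ^ j * s) := by
  intro ω hω
  simp only [Set.mem_compl_iff, Set.mem_ofPred_eq, not_and, not_forall, not_le] at hω
  rcases Nat.eq_zero_or_pos (M s ω) with hzero | hpos
  · left
    simp [relDeviationEvent, hzero, abs_of_pos hs]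
  · obtain ⟨j, hj⟩ := hω hpos
    refine Or.inr (Set.mem_iUnion.mpr ⟨j, ?_⟩)
    show η * (θ ^ j * s) ≤ |(M (θ ^ j * s) ω : ℝ) - θ ^ j * s|
    exact le_abs.mpr (Or.inl (by linarith))

theorem stmt4_general {Ω : Type*} [MeasurableSpace Ω] (P : Measure Ω)
    (M : ℝ → Ω → ℕ) (C₀ : ℝ)
    (hint : ∀ V : ℝ, 0 < V → Integrable (fun ω => ((M V ω : ℝ) - V) ^ 2) P)
    (hvar : ∀ V : ℝ, 0 < V → ∫ ω, ((M V ω : ℝ) - V) ^ 2 ∂P ≤ C₀ * V)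
    (s θ η : ℝ) (hs : 0 < s) (hθ : 1 < θ) (hη : 0 < η) :
    (P ({ω | 0 < M s ω ∧ ∀ j : ℕ, (M (θ ^ j * s) ω : ℝ) ≤ (1 + η) * θ ^ j * s}ᶜ)).toReal
      ≤ (C₀ / s) * (1 + 1 / (η ^ 2 * (1 - 1 / θ))) := by
  have hC₀ : 0 ≤ C₀ :=
    nonneg_of_mul_nonneg_left
      ((integral_nonneg fun ω => sq_nonneg ((M s ω : ℝ) - s)).trans (hvar s hs)) hs
  have hden : 0 < 1 - 1 / θ := by rw [sub_pos, div_lt_one (by positivity)]; exact hθ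
  refine ENNReal.toReal_le_of_le_ofReal (by positivity) ?_
  calc _ ≤ P (relDeviationEvent M 1 s) + ∑' j : ℕ, P (relDeviationEvent M η (θ ^ j * s)) :=
        (measure_mono (compl_pivotEvent_subset M hs)).trans <|
          (measure_union_le _ _).trans (add_le_add_right (measure_iUnion_le _) _)
    _ ≤ ENNReal.ofReal (C₀ / (1 ^ 2 * s))
          + ∑' j : ℕ, ENNReal.ofReal (C₀ / (η ^ 2 * s) / θ ^ j) := by
        gcongr with j
        · exact measure_relative_deviation_le hs one_pos (hint s hs) (hvar s hs)
        · have hV : 0 < θ ^ j * s := by positivity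
          exact (measure_relative_deviation_le hV hη (hint _ hV) (hvar _ hV)).trans_eq
            (by ring_nf)
    _ = ENNReal.ofReal ((C₀ / s) * (1 + 1 / (η ^ 2 * (1 - 1 / θ)))) := by
        rw [tsum_ofReal_div_pow (by positivity) hθ,
          ← ENNReal.ofReal_add (by positivity) (div_nonneg (by positivity) hden.le)]
        congr 1
        field_simp

/-- Probability of the pivot event: if the counting process `M(V)` has mean `V` and
variance at most `C₀ V`, then the event `E = {M(s) > 0 and M(θʲ s) ≤ (1+η) θʲ s for all j ≥ 0}`
satisfies `P(Eᶜ) ≤ (C₀/s)(1 + 1/(η²(1 - 1/θ)))`. -/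
theorem stmt4 {Ω : Type*} [MeasurableSpace Ω] (P : Measure Ω) [IsProbabilityMeasure P]
    (M : ℝ → Ω → ℕ) (C₀ : ℝ)
    (hmeas : ∀ V : ℝ, 0 < V → Measurable fun ω => M V ω)
    (hmean : ∀ V : ℝ, 0 < V → ∫ ω, (M V ω : ℝ) ∂P = V)
    (hint : ∀ V : ℝ, 0 < V → Integrable (fun ω => ((M V ω : ℝ) - V) ^ 2) P)
    (hvar : ∀ V : ℝ, 0 < V → ∫ ω, ((M V ω : ℝ) - V) ^ 2 ∂P ≤ C₀ * V)
    (s θ η : ℝ) (hs : 0 < s) (hθ : 1 < θ) (hη : 0 < η) :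
    (P ({ω | 0 < M s ω ∧ ∀ j : ℕ, (M (θ ^ j * s) ω : ℝ) ≤ (1 + η) * θ ^ j * s}ᶜ)).toReal
      ≤ (C₀ / s) * (1 + 1 / (η ^ 2 * (1 - 1 / θ))) :=
  stmt4_general P M C₀ hint hvar s θ η hs hθ hη
end

section
/- Let (Omega, P) be a probability space and M : Omega x (0,infinity) -> Z_{>=0} with M_omega nondecreasing in V for each omega, E[M(V)] = V and E[(M(V)-V)^2] <= C_0 * V for each V > 0. Define V_*(omega) = inf{V > 0 : M_omega(V) > 0} and Gamma(omega) = sup_{V >= V_*(omega)} M_omega(V) * V_*(omega) / V (on the event V_* < infinity). Then for every s > 0, theta > 1, eta > 0: P(Gamma > theta*(1+eta)*s) <= (C_0/s) * (1 + 1/(eta^2*(1 - 1/theta))). -/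
/-!
On the event that `M(s) > 0` and `M(s θ^k) ≤ (1 + η) s θ^k` for every `k`, monotonicity between
consecutive grid points gives `M(V) ≤ θ(1+η) max(V, s)`, while `V_* ≤ s`; hence every term
`M(V) V_* / V` of the supremum is at most `θ(1+η)s`. Chebyshev's inequality bounds the failure of
`M(s) > 0` by `C₀/s` and that of the `k`-th grid bound by `C₀/(η² s θ^k)`, and the geometric series
over `k` sums to the second term.
-/

open MeasureTheory

/-- First-jump volume `V_*(ω) = inf {V > 0 : M_ω(V) > 0}` of a random counting process. -/
noncomputable def Vstar {Ω : Type*} (M : ℝ → Ω → ℕ) (ω : Ω) : ℝ :=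
  sInf {V : ℝ | 0 < V ∧ 0 < M V ω}

/-- Self-normalized supremum `Γ(ω) = sup_{V ≥ V_*(ω)} M_ω(V) V_*(ω) / V`. -/
noncomputable def Gam {Ω : Type*} (M : ℝ → Ω → ℕ) (ω : Ω) : ℝ :=
  sSup {g : ℝ | ∃ V : ℝ, Vstar M ω ≤ V ∧ g = (M V ω : ℝ) * Vstar M ω / V}

open Set

lemma le_mul_max_of_le_on_geometric_grid {f : ℝ → ℝ} (hf : MonotoneOn f (Ioi 0))
    {s θ c : ℝ} (hs : 0 < s) (hθ : 1 < θ) (hc : 0 ≤ c)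
    (hgrid : ∀ k : ℕ, f (s * θ ^ k) ≤ c * (s * θ ^ k)) {V : ℝ} (hV : 0 < V) :
    f V ≤ θ * c * max V s := by
  rcases le_total V s with hVs | hsV
  · calc f V ≤ f s := hf hV hs hVs
      _ ≤ c * s := by simpa using hgrid 0
      _ ≤ θ * c * s := by nlinarith [mul_nonneg hc hs.le]
      _ = θ * c * max V s := by rw [max_eq_right hVs]
  · obtain ⟨n, hlow, hup⟩ := exists_nat_pow_near ((one_le_div hs).2 hsV) hθ
    rw [le_div_iff₀ hs] at hlow
    rw [div_lt_iff₀ hs] at hup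
    calc f V ≤ f (s * θ ^ (n + 1)) := by
          refine hf hV (mem_Ioi.2 (by positivity)) ?_
          linarith
      _ ≤ c * (s * θ ^ (n + 1)) := hgrid (n + 1)
      _ = θ * c * (θ ^ n * s) := by ring
      _ ≤ θ * c * V := by gcongr
      _ = θ * c * max V s := by rw [max_eq_left hsV]

section Pivot

variable {Ω : Type*} {M : ℝ → Ω → ℕ} {ω : Ω}

lemma Vstar_nonneg : 0 ≤ Vstar M ω :=
  Real.sInf_nonneg fun _ hV => hV.1.le

lemma Vstar_le_of_pos {s : ℝ} (hs : 0 < s) (h0 : 0 < M s ω) : Vstar M ω ≤ s :=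
  csInf_le ⟨0, fun _ hV => hV.1.le⟩ ⟨hs, h0⟩

lemma Gam_le_of_count_le_mul_max {s c : ℝ} (hs : 0 < s) (hc : 0 ≤ c) (h0 : 0 < M s ω)
    (hcount : ∀ V, 0 < V → (M V ω : ℝ) ≤ c * max V s) :
    Gam M ω ≤ c * s := by
  refine Real.sSup_le ?_ (by positivity)
  rintro _ ⟨V, hV, rfl⟩
  have hVstar_s : Vstar M ω ≤ s := Vstar_le_of_pos hs h0
  rcases (Vstar_nonneg.trans hV).eq_or_lt with rfl | hVpos
  · simp [mul_nonneg hc hs.le]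
  have hmax : max V s * Vstar M ω ≤ s * V := by
    rcases le_total V s with hVs | hsV
    · rw [max_eq_right hVs]; exact mul_le_mul_of_nonneg_left hV hs.le
    · rw [max_eq_left hsV, mul_comm s]; exact mul_le_mul_of_nonneg_left hVstar_s hVpos.le
  rw [div_le_iff₀ hVpos]
  calc (M V ω : ℝ) * Vstar M ω ≤ c * max V s * Vstar M ω := by
        gcongr
        · exact Vstar_nonneg
        · exact hcount V hVpos
    _ = c * (max V s * Vstar M ω) := by ring
    _ ≤ c * (s * V) := by gcongr
    _ = c * s * V := by ring

lemma Gam_le_of_le_on_geometric_grid (hmono : ∀ U V : ℝ, 0 < U → U ≤ V → M U ω ≤ M V ω)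
    {s θ η : ℝ} (hs : 0 < s) (hθ : 1 < θ) (hη : 0 < η) (h0 : 0 < M s ω)
    (hgrid : ∀ k : ℕ, (M (s * θ ^ k) ω : ℝ) ≤ (1 + η) * (s * θ ^ k)) :
    Gam M ω ≤ θ * (1 + η) * s := by
  have hf : MonotoneOn (fun V => (M V ω : ℝ)) (Ioi 0) := fun U hU _ _ hUV =>
    Nat.cast_le.2 (hmono _ _ hU hUV)
  refine Gam_le_of_count_le_mul_max hs (by positivity) h0 fun V hV => ?_
  exact le_mul_max_of_le_on_geometric_grid hf hs hθ (by linarith) hgrid hV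

lemma setOf_lt_Gam_subset (hmono : ∀ ω, ∀ U V : ℝ, 0 < U → U ≤ V → M U ω ≤ M V ω)
    {s θ η : ℝ} (hs : 0 < s) (hθ : 1 < θ) (hη : 0 < η) :
    {ω | θ * (1 + η) * s < Gam M ω} ⊆ {ω | s ≤ |(M s ω : ℝ) - s|} ∪
      ⋃ k : ℕ, {ω | η * (s * θ ^ k) ≤ |(M (s * θ ^ k) ω : ℝ) - s * θ ^ k|} := by
  intro ω hω
  by_contra hgood
  simp only [mem_union, mem_iUnion, mem_ofPred_eq, not_or, not_exists, not_le] at hgood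
  have h0 : 0 < M s ω := (Nat.cast_pos (α := ℝ)).1 (by linarith [(abs_lt.1 hgood.1).1])
  refine hω.not_ge (Gam_le_of_le_on_geometric_grid (hmono ω) hs hθ hη h0 fun k => ?_)
  linarith [(abs_lt.1 (hgood.2 k)).2]

end Pivot

lemma meas_le_abs_sub_le_div_sq {Ω : Type*} [MeasurableSpace Ω] (P : Measure Ω)
    [IsFiniteMeasure P] {X : Ω → ℝ} {c a B : ℝ} (ha : 0 < a)
    (hint : Integrable (fun ω => (X ω - c) ^ 2) P) (hB : ∫ ω, (X ω - c) ^ 2 ∂P ≤ B) :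
    P {ω | a ≤ |X ω - c|} ≤ ENNReal.ofReal (B / a ^ 2) := by
  have hcheb := mul_meas_ge_le_integral_of_nonneg (ae_of_all _ fun ω => sq_nonneg (X ω - c))
    hint (a ^ 2)
  have hset : {ω | a ≤ |X ω - c|} = {ω | a ^ 2 ≤ (X ω - c) ^ 2} := by
    ext ω
    simp only [mem_ofPred_eq, ← sq_abs (X ω - c)]
    exact (pow_le_pow_iff_left₀ ha.le (abs_nonneg _) two_ne_zero).symm
  have hB0 : 0 ≤ B := (integral_nonneg fun ω => sq_nonneg (X ω - c)).trans hB
  rw [hset, ENNReal.le_ofReal_iff_toReal_le (measure_ne_top _ _) (by positivity),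
    ← measureReal_def, le_div_iff₀ (by positivity)]
  linarith

lemma measure_union_iUnion_le_of_geometric {Ω : Type*} [MeasurableSpace Ω] (P : Measure Ω)
    {A : Set Ω} {B : ℕ → Set Ω} {a c r : ℝ} (ha : 0 ≤ a) (hc : 0 ≤ c) (hr0 : 0 ≤ r) (hr1 : r < 1)
    (hA : P A ≤ ENNReal.ofReal a) (hB : ∀ k, P (B k) ≤ ENNReal.ofReal (c * r ^ k)) :
    P (A ∪ ⋃ k, B k) ≤ ENNReal.ofReal (a + c * (1 - r)⁻¹) := by
  have hsum : ∑' k : ℕ, ENNReal.ofReal (c * r ^ k) = ENNReal.ofReal (c * (1 - r)⁻¹) := by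
    rw [← ENNReal.ofReal_tsum_of_nonneg (fun k => by positivity)
      ((summable_geometric_of_lt_one hr0 hr1).mul_left c), tsum_mul_left,
      tsum_geometric_of_lt_one hr0 hr1]
  have hr : 0 ≤ (1 - r)⁻¹ := inv_nonneg.2 (by linarith)
  calc P (A ∪ ⋃ k, B k) ≤ P A + ∑' k, P (B k) :=
        (measure_union_le _ _).trans (add_le_add_right (measure_iUnion_le _) _)
    _ ≤ ENNReal.ofReal a + ∑' k : ℕ, ENNReal.ofReal (c * r ^ k) :=
        add_le_add hA (ENNReal.tsum_le_tsum hB)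
    _ = ENNReal.ofReal (a + c * (1 - r)⁻¹) := by
        rw [hsum, ENNReal.ofReal_add ha (mul_nonneg hc hr)]

theorem stmt5_general {Ω : Type*} [MeasurableSpace Ω] (P : Measure Ω) [IsProbabilityMeasure P]
    (M : ℝ → Ω → ℕ) (C₀ : ℝ)
    (hmono : ∀ ω, ∀ U V : ℝ, 0 < U → U ≤ V → M U ω ≤ M V ω)
    (hint : ∀ V : ℝ, 0 < V → Integrable (fun ω => ((M V ω : ℝ) - V) ^ 2) P)
    (hvar : ∀ V : ℝ, 0 < V → ∫ ω, ((M V ω : ℝ) - V) ^ 2 ∂P ≤ C₀ * V)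
    (s θ η : ℝ) (hs : 0 < s) (hθ : 1 < θ) (hη : 0 < η) :
    (P {ω | θ * (1 + η) * s < Gam M ω}).toReal
      ≤ (C₀ / s) * (1 + 1 / (η ^ 2 * (1 - 1 / θ))) := by
  have hC₀ : 0 ≤ C₀ := by
    have hsq : 0 ≤ ∫ ω, ((M 1 ω : ℝ) - 1) ^ 2 ∂P := integral_nonneg fun ω => sq_nonneg _
    linarith [hvar 1 one_pos]
  have hθ0 : 0 < θ := one_pos.trans hθ
  have hr1 : 1 / θ < 1 := (div_lt_one hθ0).2 hθ
  have hgrid : ∀ k : ℕ, 0 < s * θ ^ k := fun k => by positivity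
  have hA := meas_le_abs_sub_le_div_sq P hs (hint s hs) (hvar s hs)
  have hB := fun k => meas_le_abs_sub_le_div_sq P (mul_pos hη (hgrid k))
    (hint _ (hgrid k)) (hvar _ (hgrid k))
  have hA' : C₀ * s / s ^ 2 = C₀ / s := by field_simp
  have hB' : ∀ k : ℕ,
      C₀ * (s * θ ^ k) / (η * (s * θ ^ k)) ^ 2 = C₀ / (η ^ 2 * s) * (1 / θ) ^ k := by
    intro k
    rw [div_pow, one_pow]
    field_simp
  simp only [hA', hB'] at hA hB
  have hunion := (measure_mono (setOf_lt_Gam_subset hmono hs hθ hη)).trans (measure_union_iUnion_le_of_geometric P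
    (by positivity) (by positivity) (by positivity) hr1 hA hB)
  refine (ENNReal.toReal_le_of_le_ofReal (by positivity) hunion).trans_eq ?_
  field_simp

/-- Abstract pivot inequality: if `M_ω(V)` is nondecreasing in `V` with mean `V` and
variance at most `C₀ V`, then `P(Γ > θ(1+η)s) ≤ (C₀/s)(1 + 1/(η²(1 - 1/θ)))`. -/
theorem stmt5 {Ω : Type*} [MeasurableSpace Ω] (P : Measure Ω) [IsProbabilityMeasure P]
    (M : ℝ → Ω → ℕ) (C₀ : ℝ)
    (hmono : ∀ ω, ∀ U V : ℝ, 0 < U → U ≤ V → M U ω ≤ M V ω)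
    (hmeas : ∀ V : ℝ, 0 < V → Measurable fun ω => M V ω)
    (hmean : ∀ V : ℝ, 0 < V → ∫ ω, (M V ω : ℝ) ∂P = V)
    (hint : ∀ V : ℝ, 0 < V → Integrable (fun ω => ((M V ω : ℝ) - V) ^ 2) P)
    (hvar : ∀ V : ℝ, 0 < V → ∫ ω, ((M V ω : ℝ) - V) ^ 2 ∂P ≤ C₀ * V)
    (s θ η : ℝ) (hs : 0 < s) (hθ : 1 < θ) (hη : 0 < η) :
    (P {ω | θ * (1 + η) * s < Gam M ω}).toReal
      ≤ (C₀ / s) * (1 + 1 / (η ^ 2 * (1 - 1 / θ))) :=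
  stmt5_general P M C₀ hmono hint hvar s θ η hs hθ hη
end
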